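/- Local differential privacy implies trace-distance contraction: let ε ≥ 0, 0 ≤ δ ≤ 1, and let A be a quantum channel on a finite-dimensional system such that E_{e^ε}(A(ρ)‖A(σ)) ≤ δ for ALL pairs of density operators ρ, σ (i.e., A is (ε,δ)-locally differentially private). Then η₁(A) ≤ 1 − e^{−ε}(1 − δ); equivalently, for all density operators ρ, σ, (1/2)‖A(ρ) − A(σ)‖₁ ≤ (1 − e^{−ε}(1−δ)) · (1/2)‖ρ − σ‖₁. -/

import Mathlib

open scoped BigOperators ComplexOrder

/-- Trace of the positive part of a Hermitian matrix (0 if not Hermitian). -/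
noncomputable def posPartTrace {n : Type*} [Fintype n] [DecidableEq n]
    (X : Matrix n n ℂ) : ℝ :=
  if h : X.IsHermitian then ∑ i, max (h.eigenvalues i) 0 else 0

/-- The quantum hockey-stick divergence `E_γ(ρ‖σ) = Tr[(ρ - γσ)₊]`. -/
noncomputable def hsDiv {n : Type*} [Fintype n] [DecidableEq n]
    (γ : ℝ) (ρ σ : Matrix n n ℂ) : ℝ :=
  posPartTrace (ρ - (γ : ℂ) • σ)

/-- A density operator: positive semidefinite with unit trace. -/
def IsDensity {n : Type*} [Fintype n] [DecidableEq n] (ρ : Matrix n n ℂ) : Prop :=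
  ρ.PosSemidef ∧ ρ.trace = 1

/-- Trace norm: the sum of the singular values. -/
noncomputable def traceNorm {n : Type*} [Fintype n] [DecidableEq n]
    (X : Matrix n n ℂ) : ℝ :=
  ∑ i, Real.sqrt ((Matrix.posSemidef_conjTranspose_mul_self X).isHermitian.eigenvalues i)

/-- Completely positive trace-preserving linear map. -/
def IsCPTP {n m : Type*} [Fintype n] [DecidableEq n] [Fintype m] [DecidableEq m]
    (Φ : Matrix n n ℂ →ₗ[ℂ] Matrix m m ℂ) : Prop :=
  (∀ k : ℕ, ∀ X : Matrix (Fin k × n) (Fin k × n) ℂ, X.PosSemidef →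
      (Matrix.of fun p q : Fin k × m =>
        Φ (Matrix.of fun i j => X (p.1, i) (q.1, j)) p.2 q.2).PosSemidef) ∧
  (∀ X, (Φ X).trace = X.trace)

/-- Contraction coefficient of a channel for the hockey-stick divergence. -/
noncomputable def contractionCoeff {n : Type*} [Fintype n] [DecidableEq n]
    (γ : ℝ) (Φ : Matrix n n ℂ →ₗ[ℂ] Matrix n n ℂ) : ℝ :=
  sSup {x : ℝ | ∃ ρ σ : Matrix n n ℂ, IsDensity ρ ∧ IsDensity σ ∧
    0 < hsDiv γ ρ σ ∧ x = hsDiv γ (Φ ρ) (Φ σ) / hsDiv γ ρ σ}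

/-! Write `ρ - σ = P - N` with `P, N ≥ 0` the positive and negative parts; both have trace
`E₁(ρ‖σ)`, so rescaling them gives a pair of density operators, and by homogeneity of `E₁` the
contraction coefficient of `E₁` is at most the largest value of `E₁` on pairs of output states.
For outputs `A`, `B` and the projection `Q` onto the positive part of `A - B`,
`E₁(A‖B) = Tr Q(A - B)` while `E_γ(A‖B) ≥ Tr Q(A - γB)`; together with `Tr QA ≤ 1` this gives
`γ E₁(A‖B) ≤ γ - 1 + E_γ(A‖B) ≤ e^ε - 1 + δ` for `γ = e^ε`. Finally `½‖X‖₁ = Tr X₊` for a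
traceless Hermitian `X`. -/

open Matrix
open scoped MatrixOrder

variable {n : Type*} [Fintype n] [DecidableEq n] {X : Matrix n n ℂ}

lemma Matrix.continuousOn_real_spectrum (X : Matrix n n ℂ) (f : ℝ → ℝ) :
    ContinuousOn f (spectrum ℝ X) :=
  X.finite_real_spectrum.continuousOn f

lemma Matrix.IsHermitian.trace_cfc (hX : X.IsHermitian) (f : ℝ → ℝ) :
    (cfc f X).trace = ∑ i, (f (hX.eigenvalues i) : ℂ) := by
  rw [hX.cfc_eq, IsHermitian.cfc, Unitary.conjStarAlgAut_apply, trace_mul_cycle,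
    Unitary.coe_star_mul_self, one_mul, trace_diagonal]
  rfl

lemma Matrix.PosSemidef.trace_mul_nonneg {A B : Matrix n n ℂ} (hA : A.PosSemidef)
    (hB : B.PosSemidef) : 0 ≤ (A * B).trace := by
  have hsqrt : (CFC.sqrt B)ᴴ = CFC.sqrt B := (CFC.sqrt_nonneg B).isSelfAdjoint
  rw [← CFC.sqrt_mul_sqrt_self B hB.nonneg, ← mul_assoc, trace_mul_cycle]
  simpa only [hsqrt] using (hA.mul_mul_conjTranspose_same (CFC.sqrt B)).trace_nonneg

lemma Matrix.PosSemidef.re_trace_mul_le {A Q : Matrix n n ℂ} (hA : A.PosSemidef) (hQ : Q ≤ 1) :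
    (Q * A).trace.re ≤ A.trace.re := by
  have := (Complex.le_def.1 ((sub_nonneg.2 hQ).posSemidef.trace_mul_nonneg hA)).1
  simpa [sub_mul, Matrix.trace_sub] using this

lemma Matrix.IsHermitian.posPartTrace_eq (hX : X.IsHermitian) :
    posPartTrace X = ∑ i, max (hX.eigenvalues i) 0 :=
  dif_pos hX

lemma posPartTrace_nonneg (X : Matrix n n ℂ) : 0 ≤ posPartTrace X := by
  unfold posPartTrace
  split_ifs
  exacts [Finset.sum_nonneg fun i _ => le_max_right _ _, le_rfl]

lemma posPartTrace_zero : posPartTrace (0 : Matrix n n ℂ) = 0 := by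
  simp [isHermitian_zero.posPartTrace_eq, isHermitian_zero.eigenvalues_eq_zero_iff.2 rfl]

lemma posPartTrace_cfc (hX : X.IsHermitian) (f : ℝ → ℝ) :
    posPartTrace (cfc f X) = ∑ i, max (f (hX.eigenvalues i)) 0 := by
  have h := (cfc_predicate f X).isHermitian
  apply Complex.ofReal_injective
  rw [h.posPartTrace_eq]
  push_cast
  rw [← h.trace_cfc (fun x => max x 0),
    ← cfc_comp' (fun x => max x 0) f X (by fun_prop) (X.continuousOn_real_spectrum f),
    hX.trace_cfc]

lemma posPartTrace_smul (hX : X.IsHermitian) {c : ℝ} (hc : 0 ≤ c) :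
    posPartTrace (c • X) = c * posPartTrace X := by
  rw [← cfc_const_mul_id c X, posPartTrace_cfc hX, hX.posPartTrace_eq, Finset.mul_sum]
  simp_rw [mul_max_of_nonneg _ _ hc, mul_zero]

lemma Matrix.IsHermitian.trace_cfc_max_zero (hX : X.IsHermitian) :
    (cfc (fun x : ℝ => max x 0) X).trace = posPartTrace X := by
  rw [hX.trace_cfc, hX.posPartTrace_eq]
  push_cast
  rfl

lemma Matrix.IsHermitian.exists_posSemidef_sub_eq (hX : X.IsHermitian) :
    ∃ P N : Matrix n n ℂ, P.PosSemidef ∧ N.PosSemidef ∧ X = P - N ∧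
      P.trace = posPartTrace X ∧ N.trace = posPartTrace X - X.trace := by
  have hpos := X.continuousOn_real_spectrum (fun x => max x 0)
  have hneg := X.continuousOn_real_spectrum (fun x => max (-x) 0)
  refine ⟨cfc (fun x : ℝ => max x 0) X, cfc (fun x : ℝ => max (-x) 0) X,
    (cfc_nonneg fun x _ => le_max_right _ _).posSemidef,
    (cfc_nonneg fun x _ => le_max_right _ _).posSemidef, ?_, hX.trace_cfc_max_zero, ?_⟩
  · rw [← cfc_sub _ _ X hpos hneg]
    conv_lhs => rw [← cfc_id' ℝ X]
    congr 1
    ext x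
    rcases le_total 0 x with hx | hx <;> simp [hx]
  · rw [hX.trace_cfc, hX.posPartTrace_eq, hX.trace_eq_sum_eigenvalues]
    push_cast
    rw [← Finset.sum_sub_distrib]
    congr 1
    ext i
    rcases le_total 0 (hX.eigenvalues i) with hx | hx <;> simp [hx]

lemma re_trace_mul_le_posPartTrace (hX : X.IsHermitian) {Q : Matrix n n ℂ} (hQ0 : 0 ≤ Q)
    (hQ1 : Q ≤ 1) : (Q * X).trace.re ≤ posPartTrace X := by
  obtain ⟨P, N, hP, hN, hPN, hPtr, -⟩ := hX.exists_posSemidef_sub_eq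
  have hQN := (Complex.le_def.1 (hQ0.posSemidef.trace_mul_nonneg hN)).1
  have hQP := hP.re_trace_mul_le hQ1
  rw [hPtr, Complex.ofReal_re] at hQP
  rw [hPN, mul_sub, Matrix.trace_sub, Complex.sub_re, ← hPN]
  simp only [Complex.zero_re] at hQN
  linarith

lemma exists_re_trace_mul_eq_posPartTrace (hX : X.IsHermitian) :
    ∃ Q : Matrix n n ℂ, 0 ≤ Q ∧ Q ≤ 1 ∧ (Q * X).trace.re = posPartTrace X := by
  let f : ℝ → ℝ := fun x => if 0 < x then 1 else 0
  refine ⟨cfc f X, cfc_nonneg fun x _ => by positivity, cfc_le_one f X fun x _ => ?_, ?_⟩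
  · dsimp only [f]; split_ifs <;> norm_num
  · have hfx : (fun x => f x * x) = fun x => max x 0 := by
      ext x
      dsimp only [f]
      split_ifs with hx
      · rw [one_mul, max_eq_left hx.le]
      · rw [zero_mul, max_eq_right (not_lt.1 hx)]
    have hQX : cfc f X * X = cfc (fun x : ℝ => max x 0) X := by
      rw [← hfx, cfc_mul f (fun x => x) X (X.continuousOn_real_spectrum f), cfc_id' ℝ X]
    rw [hQX, hX.trace_cfc_max_zero, Complex.ofReal_re]

lemma Matrix.IsHermitian.traceNorm_eq (hX : X.IsHermitian) :
    traceNorm X = ∑ i, |hX.eigenvalues i| := by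
  have hsq : Xᴴ * X = X ^ 2 := by rw [hX.eq, sq]
  apply Complex.ofReal_injective
  rw [traceNorm]
  push_cast
  rw [← (posSemidef_conjTranspose_mul_self X).isHermitian.trace_cfc Real.sqrt, hsq,
    ← cfc_comp_pow Real.sqrt 2 X (by fun_prop), hX.trace_cfc]
  simp [Real.sqrt_sq_eq_abs]

lemma Matrix.IsHermitian.traceNorm_eq_two_mul_posPartTrace (hX : X.IsHermitian)
    (hX0 : X.trace = 0) : traceNorm X = 2 * posPartTrace X := by
  have hsum : ∑ i, hX.eigenvalues i = 0 := by
    have h := hX.trace_eq_sum_eigenvalues.symm.trans hX0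
    rwa [← RCLike.ofReal_sum, RCLike.ofReal_eq_zero] at h
  have habs (x : ℝ) : |x| = 2 * max x 0 - x := by
    rcases le_total 0 x with hx | hx
    · rw [abs_of_nonneg hx, max_eq_left hx]; ring
    · rw [abs_of_nonpos hx, max_eq_right hx]; ring
  simp_rw [hX.traceNorm_eq, hX.posPartTrace_eq, habs]
  rw [Finset.sum_sub_distrib, hsum, sub_zero, Finset.mul_sum]

lemma hsDiv_eq (γ : ℝ) (ρ σ : Matrix n n ℂ) : hsDiv γ ρ σ = posPartTrace (ρ - γ • σ) := by
  rw [hsDiv, Complex.coe_smul]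

lemma hsDiv_one (ρ σ : Matrix n n ℂ) : hsDiv 1 ρ σ = posPartTrace (ρ - σ) := by
  rw [hsDiv_eq, one_smul]

lemma isDensity_inv_smul {P : Matrix n n ℂ} (hP : P.PosSemidef) {t : ℝ}
    (hPt : P.trace = t) (ht : 0 < t) : IsDensity (t⁻¹ • P) := by
  refine ⟨hP.smul (inv_nonneg.2 ht.le), ?_⟩
  rw [trace_smul, hPt, Complex.real_smul, Complex.ofReal_inv, inv_mul_cancel₀]
  exact_mod_cast ht.ne'

namespace IsDensity

variable {ρ σ : Matrix n n ℂ}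

lemma isHermitian_sub (hρ : IsDensity ρ) (hσ : IsDensity σ) : (ρ - σ).IsHermitian :=
  hρ.1.1.sub hσ.1.1

lemma trace_sub (hρ : IsDensity ρ) (hσ : IsDensity σ) : (ρ - σ).trace = 0 := by
  rw [Matrix.trace_sub, hρ.2, hσ.2, sub_self]

lemma hsDiv_one_eq_half_traceNorm (hρ : IsDensity ρ) (hσ : IsDensity σ) :
    hsDiv 1 ρ σ = 1 / 2 * traceNorm (ρ - σ) := by
  rw [(hρ.isHermitian_sub hσ).traceNorm_eq_two_mul_posPartTrace (hρ.trace_sub hσ), hsDiv_one]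
  ring

lemma mul_hsDiv_one_le (hρ : IsDensity ρ) (hσ : IsDensity σ) {γ : ℝ} (hγ : 1 ≤ γ) :
    γ * hsDiv 1 ρ σ ≤ γ - 1 + hsDiv γ ρ σ := by
  obtain ⟨Q, hQ0, hQ1, hQ⟩ := exists_re_trace_mul_eq_posPartTrace (hρ.isHermitian_sub hσ)
  have hQγ := re_trace_mul_le_posPartTrace (hρ.1.1.sub (hσ.1.1.smul (IsSelfAdjoint.all γ)))
    hQ0 hQ1
  have hQρ := hρ.1.re_trace_mul_le hQ1
  rw [hρ.2, Complex.one_re] at hQρ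
  rw [hsDiv_one, ← hQ, hsDiv_eq]
  simp only [mul_sub, Matrix.mul_smul, Matrix.trace_sub, Matrix.trace_smul, Complex.sub_re,
    Complex.smul_re, smul_eq_mul] at hQγ ⊢
  nlinarith

end IsDensity

namespace IsCPTP

variable {m : Type*} [Fintype m] [DecidableEq m] {Φ : Matrix n n ℂ →ₗ[ℂ] Matrix m m ℂ}

lemma posSemidef_map (hΦ : IsCPTP Φ) {A : Matrix n n ℂ} (hA : A.PosSemidef) :
    (Φ A).PosSemidef :=
  (hΦ.1 1 (A.submatrix Prod.snd Prod.snd) (hA.submatrix Prod.snd)).submatrix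
    fun i : m => ((0 : Fin 1), i)

lemma isDensity_map (hΦ : IsCPTP Φ) {ρ : Matrix n n ℂ} (hρ : IsDensity ρ) : IsDensity (Φ ρ) :=
  ⟨hΦ.posSemidef_map hρ.1, (hΦ.2 ρ).trans hρ.2⟩

theorem hsDiv_one_le_mul (hΦ : IsCPTP Φ) {c : ℝ}
    (hc : ∀ ρ σ, IsDensity ρ → IsDensity σ → hsDiv 1 (Φ ρ) (Φ σ) ≤ c)
    {ρ σ : Matrix n n ℂ} (hρ : IsDensity ρ) (hσ : IsDensity σ) :
    hsDiv 1 (Φ ρ) (Φ σ) ≤ c * hsDiv 1 ρ σ := by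
  obtain ⟨P, N, hP, hN, hPN, hPtr, hNtr⟩ := (hρ.isHermitian_sub hσ).exists_posSemidef_sub_eq
  rw [hρ.trace_sub hσ, sub_zero] at hNtr
  have hΦPN : Φ ρ - Φ σ = Φ P - Φ N := by rw [← map_sub, hPN, map_sub]
  rw [hsDiv_one, hsDiv_one, hΦPN]
  have ht0 := posPartTrace_nonneg (ρ - σ)
  generalize posPartTrace (ρ - σ) = t at hPtr hNtr ht0 ⊢
  rcases ht0.eq_or_lt with ht | ht
  · have hP0 : P = 0 := hP.trace_eq_zero_iff.1 (by rw [hPtr, ← ht, Complex.ofReal_zero])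
    have hN0 : N = 0 := hN.trace_eq_zero_iff.1 (by rw [hNtr, ← ht, Complex.ofReal_zero])
    rw [hP0, hN0, sub_self, posPartTrace_zero, ← ht, mul_zero]
  · have hρ' := isDensity_inv_smul hP hPtr ht
    have hσ' := isDensity_inv_smul hN hNtr ht
    have hscale : Φ P - Φ N = t • (Φ (t⁻¹ • P) - Φ (t⁻¹ • N)) := by
      rw [LinearMap.map_smul_of_tower, LinearMap.map_smul_of_tower, ← smul_sub,
        smul_inv_smul₀ ht.ne']
    rw [hscale, posPartTrace_smul ((hΦ.isDensity_map hρ').isHermitian_sub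
      (hΦ.isDensity_map hσ')) ht.le, mul_comm]
    exact mul_le_mul_of_nonneg_right (hsDiv_one (Φ _) (Φ _) ▸ hc _ _ hρ' hσ') ht.le

end IsCPTP

theorem ldp_implies_trace_contraction_general {d : ℕ} (ε δ : ℝ)
    (hε : 0 ≤ ε) (hδ0 : 0 ≤ δ)
    (Φ : Matrix (Fin d) (Fin d) ℂ →ₗ[ℂ] Matrix (Fin d) (Fin d) ℂ) (hΦ : IsCPTP Φ)
    (hLDP : ∀ ρ σ : Matrix (Fin d) (Fin d) ℂ, IsDensity ρ → IsDensity σ →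
      hsDiv (Real.exp ε) (Φ ρ) (Φ σ) ≤ δ) :
    contractionCoeff 1 Φ ≤ 1 - Real.exp (-ε) * (1 - δ) ∧
    ∀ ρ σ : Matrix (Fin d) (Fin d) ℂ, IsDensity ρ → IsDensity σ →
      (1 / 2) * traceNorm (Φ ρ - Φ σ) ≤
        (1 - Real.exp (-ε) * (1 - δ)) * ((1 / 2) * traceNorm (ρ - σ)) := by
  have hc : 0 ≤ 1 - Real.exp (-ε) * (1 - δ) := by
    nlinarith [Real.exp_pos (-ε), Real.exp_le_one_iff.2 (neg_nonpos.2 hε)]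
  have hpair (ρ σ : Matrix (Fin d) (Fin d) ℂ) (hρ : IsDensity ρ) (hσ : IsDensity σ) :
      hsDiv 1 (Φ ρ) (Φ σ) ≤ 1 - Real.exp (-ε) * (1 - δ) := by
    have hE₁ := (hΦ.isDensity_map hρ).mul_hsDiv_one_le (hΦ.isDensity_map hσ) (Real.one_le_exp hε)
    have hEγ := hLDP ρ σ hρ hσ
    rw [Real.exp_neg, ← div_eq_inv_mul, le_sub_comm, div_le_iff₀ (Real.exp_pos ε)]
    linarith
  have hcontr (ρ σ : Matrix (Fin d) (Fin d) ℂ) (hρ : IsDensity ρ) (hσ : IsDensity σ) :=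
    hΦ.hsDiv_one_le_mul hpair hρ hσ
  refine ⟨Real.sSup_le ?_ hc, fun ρ σ hρ hσ => ?_⟩
  · rintro x ⟨ρ, σ, hρ, hσ, hpos, rfl⟩
    exact (div_le_iff₀ hpos).2 (hcontr ρ σ hρ hσ)
  · rw [← hρ.hsDiv_one_eq_half_traceNorm hσ,
      ← (hΦ.isDensity_map hρ).hsDiv_one_eq_half_traceNorm (hΦ.isDensity_map hσ)]
    exact hcontr ρ σ hρ hσ

/-- Local differential privacy implies trace-distance contraction: if
`E_{e^ε}(A(ρ)‖A(σ)) ≤ δ` for all pairs of density operators, then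
`η₁(A) ≤ 1 - e^{-ε}(1-δ)` and the trace distance contracts by that factor. -/
theorem ldp_implies_trace_contraction {d : ℕ} (ε δ : ℝ)
    (hε : 0 ≤ ε) (hδ0 : 0 ≤ δ) (hδ1 : δ ≤ 1)
    (Φ : Matrix (Fin d) (Fin d) ℂ →ₗ[ℂ] Matrix (Fin d) (Fin d) ℂ) (hΦ : IsCPTP Φ)
    (hLDP : ∀ ρ σ : Matrix (Fin d) (Fin d) ℂ, IsDensity ρ → IsDensity σ →
      hsDiv (Real.exp ε) (Φ ρ) (Φ σ) ≤ δ) :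
    contractionCoeff 1 Φ ≤ 1 - Real.exp (-ε) * (1 - δ) ∧
    ∀ ρ σ : Matrix (Fin d) (Fin d) ℂ, IsDensity ρ → IsDensity σ →
      (1 / 2) * traceNorm (Φ ρ - Φ σ) ≤
        (1 - Real.exp (-ε) * (1 - δ)) * ((1 / 2) * traceNorm (ρ - σ)) :=
  ldp_implies_trace_contraction_general ε δ hε hδ0 Φ hΦ hLDP
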